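/- Let A ∈ ℝ^{n×d} with ‖A‖ ≤ R for some R ≥ 4, let β ∈ (0, 0.1), and let x, y ∈ ℝ^d satisfy ‖A(x − y)‖_∞ < 0.01, ⟨exp(Ax), 1_n⟩ ≥ β, ⟨exp(Ay), 1_n⟩ ≥ β, ‖x‖_2 ≤ R, ‖y‖_2 ≤ R. Define f(z) := ⟨exp(Az), 1_n⟩^{-1} · exp(Az). Then ‖f(x) − f(y)‖_2 ≤ β^{-2} n^{1.5} exp(3R²) · ‖x − y‖_2. -/

import Mathlib

open Matrix

/-- The Euclidean (ℓ2) norm of a vector in ℝ^n. -/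
noncomputable def l2norm {n : ℕ} (u : Fin n → ℝ) : ℝ := Real.sqrt (∑ i, u i ^ 2)

/-- The supremum (ℓ∞) norm of a vector in ℝ^n. -/
noncomputable def linfNorm {n : ℕ} (u : Fin n → ℝ) : ℝ := ⨆ i, |u i|

/-- The spectral (ℓ2 operator) norm of a matrix. -/
noncomputable def specNorm {n d : ℕ} (A : Matrix (Fin n) (Fin d) ℝ) : ℝ :=
  ‖LinearMap.toContinuousLinearMap (Matrix.toEuclideanLin A)‖

/-- The softmax function f(z) = ⟨exp(Az), 1_n⟩⁻¹ · exp(Az). -/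
noncomputable def softmaxFn {n d : ℕ} (A : Matrix (Fin n) (Fin d) ℝ) (z : Fin d → ℝ) :
    Fin n → ℝ :=
  (∑ i, Real.exp (A.mulVec z i))⁻¹ • fun i => Real.exp (A.mulVec z i)

/-!
The entries of `Ax` and `Ay` are at most `R²`, so on them `exp` is `e^{R²}`-Lipschitz and
`‖exp(Ax) - exp(Ay)‖₂ ≤ e^{R²} R ‖x - y‖₂`. Normalising a positive vector `p` to unit sum is
Lipschitz with constant `(1 + √n) / ∑ p ≤ 2√n / β`. The stated constant has room to spare:
`2R ≤ e^{R²}` and `β ≤ ∑ exp(Ax) ≤ n e^{R²}` give `2Rβ ≤ n e^{2R²}`.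
-/

open Real

lemma l2norm_eq_norm_toLp {n : ℕ} (u : Fin n → ℝ) : l2norm u = ‖WithLp.toLp 2 u‖ := by
  simp [l2norm, EuclideanSpace.norm_eq]

lemma l2norm_nonneg {n : ℕ} (u : Fin n → ℝ) : 0 ≤ l2norm u := sqrt_nonneg _

lemma l2norm_add_le {n : ℕ} (u v : Fin n → ℝ) : l2norm (u + v) ≤ l2norm u + l2norm v := by
  simpa only [l2norm_eq_norm_toLp, WithLp.toLp_add] using norm_add_le _ _

lemma l2norm_smul {n : ℕ} (c : ℝ) (u : Fin n → ℝ) : l2norm (c • u) = |c| * l2norm u := by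
  simp only [l2norm_eq_norm_toLp, WithLp.toLp_smul, norm_smul, Real.norm_eq_abs]

lemma l2norm_le_l2norm_of_abs_le {n : ℕ} {u v : Fin n → ℝ} (h : ∀ i, |u i| ≤ |v i|) :
    l2norm u ≤ l2norm v :=
  sqrt_le_sqrt <| Finset.sum_le_sum fun i _ => sq_le_sq.2 (h i)

lemma abs_apply_le_l2norm {n : ℕ} (u : Fin n → ℝ) (i : Fin n) : |u i| ≤ l2norm u :=
  abs_le_sqrt <| Finset.single_le_sum (fun j _ => sq_nonneg (u j)) (Finset.mem_univ i)

lemma l2norm_le_sum_of_nonneg {n : ℕ} {u : Fin n → ℝ} (hu : ∀ i, 0 ≤ u i) :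
    l2norm u ≤ ∑ i, u i :=
  sqrt_le_left (Finset.sum_nonneg fun i _ => hu i) |>.mpr <|
    Finset.sum_sq_le_sq_sum_of_nonneg fun i _ => hu i

lemma abs_sum_le_sqrt_card_mul_l2norm {n : ℕ} (u : Fin n → ℝ) :
    |∑ i, u i| ≤ √n * l2norm u := by
  rw [l2norm, ← sqrt_mul (Nat.cast_nonneg n)]
  simpa using abs_le_sqrt (sq_sum_le_card_mul_sum_sq (s := Finset.univ) (f := u))

lemma specNorm_nonneg {n d : ℕ} (A : Matrix (Fin n) (Fin d) ℝ) : 0 ≤ specNorm A :=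
  norm_nonneg _

lemma l2norm_mulVec_le {n d : ℕ} (A : Matrix (Fin n) (Fin d) ℝ) (z : Fin d → ℝ) :
    l2norm (A *ᵥ z) ≤ specNorm A * l2norm z := by
  rw [l2norm_eq_norm_toLp, l2norm_eq_norm_toLp]
  exact (LinearMap.toContinuousLinearMap (Matrix.toEuclideanLin A)).le_opNorm (WithLp.toLp 2 z)

lemma mulVec_apply_le_sq {n d : ℕ} {A : Matrix (Fin n) (Fin d) ℝ} {R : ℝ} {z : Fin d → ℝ}
    (hA : specNorm A ≤ R) (hz : l2norm z ≤ R) (i : Fin n) : (A *ᵥ z) i ≤ R ^ 2 :=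
  calc (A *ᵥ z) i ≤ l2norm (A *ᵥ z) := (le_abs_self _).trans (abs_apply_le_l2norm _ i)
    _ ≤ R * R := (l2norm_mulVec_le A z).trans
        (mul_le_mul hA hz (l2norm_nonneg z) ((specNorm_nonneg A).trans hA))
    _ = R ^ 2 := (sq R).symm

lemma abs_exp_sub_exp_le {a b M : ℝ} (ha : a ≤ M) (hb : b ≤ M) :
    |exp a - exp b| ≤ exp M * |a - b| := by
  wlog hba : b ≤ a generalizing a b
  · rw [abs_sub_comm, abs_sub_comm a]
    exact this hb ha (le_of_not_ge hba)
  have hb_ge : exp a * (1 - (a - b)) ≤ exp b :=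
    calc exp a * (1 - (a - b)) ≤ exp a * exp (-(a - b)) :=
          mul_le_mul_of_nonneg_left (one_sub_le_exp_neg _) (exp_pos a).le
      _ = exp b := by rw [← exp_add]; ring_nf
  rw [abs_of_nonneg (sub_nonneg.2 (exp_le_exp.2 hba)), abs_of_nonneg (sub_nonneg.2 hba)]
  calc exp a - exp b ≤ exp a * (a - b) := by linarith
    _ ≤ exp M * (a - b) := mul_le_mul_of_nonneg_right (exp_le_exp.2 ha) (sub_nonneg.2 hba)

lemma l2norm_exp_sub_exp_le {n : ℕ} {u v : Fin n → ℝ} {M : ℝ} (hu : ∀ i, u i ≤ M)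
    (hv : ∀ i, v i ≤ M) :
    l2norm ((fun i => exp (u i)) - fun i => exp (v i)) ≤ exp M * l2norm (u - v) := by
  rw [← abs_of_pos (exp_pos M), ← l2norm_smul]
  refine l2norm_le_l2norm_of_abs_le fun i => ?_
  simpa [abs_mul, abs_of_pos (exp_pos M)] using abs_exp_sub_exp_le (hu i) (hv i)

lemma l2norm_exp_mulVec_sub_le {n d : ℕ} {A : Matrix (Fin n) (Fin d) ℝ} {R : ℝ}
    {x y : Fin d → ℝ} (hA : specNorm A ≤ R) (hx : l2norm x ≤ R) (hy : l2norm y ≤ R) :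
    l2norm ((fun i => exp ((A *ᵥ x) i)) - fun i => exp ((A *ᵥ y) i)) ≤
      exp (R ^ 2) * (R * l2norm (x - y)) := by
  refine (l2norm_exp_sub_exp_le (mulVec_apply_le_sq hA hx) (mulVec_apply_le_sq hA hy)).trans ?_
  rw [← Matrix.mulVec_sub]
  gcongr
  exact (l2norm_mulVec_le A _).trans (mul_le_mul_of_nonneg_right hA (l2norm_nonneg _))

lemma sum_exp_mulVec_le {n d : ℕ} {A : Matrix (Fin n) (Fin d) ℝ} {R : ℝ} {z : Fin d → ℝ}
    (hA : specNorm A ≤ R) (hz : l2norm z ≤ R) : ∑ i, exp ((A *ᵥ z) i) ≤ n * exp (R ^ 2) :=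
  (Finset.sum_le_sum fun i _ => exp_le_exp.2 (mulVec_apply_le_sq hA hz i)).trans_eq (by simp)

/-- `p / ∑ p - q / ∑ q = (p - q) / ∑ p + ((∑ q - ∑ p) / ∑ p) • (q / ∑ q)`, and `‖q / ∑ q‖₂ ≤ 1`
for `q ≥ 0`. -/
lemma l2norm_inv_sum_smul_sub_le {n : ℕ} {p q : Fin n → ℝ} (hq : ∀ i, 0 ≤ q i)
    (hp_sum : 0 < ∑ i, p i) (hq_sum : 0 < ∑ i, q i) :
    l2norm ((∑ i, p i)⁻¹ • p - (∑ i, q i)⁻¹ • q) ≤ (1 + √n) * l2norm (p - q) / ∑ i, p i := by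
  set S := ∑ i, p i
  set T := ∑ i, q i
  have hdecomp : S⁻¹ • p - T⁻¹ • q = S⁻¹ • (p - q) + (S⁻¹ * (T - S)) • (T⁻¹ • q) := by
    rw [smul_smul, show S⁻¹ * (T - S) * T⁻¹ = S⁻¹ - T⁻¹ by field_simp]
    module
  have hq_normalized : l2norm (T⁻¹ • q) ≤ 1 := by
    rw [l2norm_smul, abs_of_pos (inv_pos.2 hq_sum), inv_mul_le_iff₀ hq_sum, mul_one]
    exact l2norm_le_sum_of_nonneg hq
  have hsum_sub : |T - S| ≤ √n * l2norm (p - q) := by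
    rw [abs_sub_comm, ← Finset.sum_sub_distrib]
    exact abs_sum_le_sqrt_card_mul_l2norm (p - q)
  have hTq_nonneg := l2norm_nonneg (T⁻¹ • q)
  have hpq_nonneg := l2norm_nonneg (p - q)
  rw [hdecomp]
  calc _ ≤ S⁻¹ * l2norm (p - q) + S⁻¹ * |T - S| * l2norm (T⁻¹ • q) := by
        refine (l2norm_add_le _ _).trans_eq ?_
        rw [l2norm_smul, l2norm_smul, abs_mul, abs_of_pos (inv_pos.2 hp_sum)]
    _ ≤ S⁻¹ * l2norm (p - q) + S⁻¹ * (√n * l2norm (p - q)) * 1 := by gcongr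
    _ = (1 + √n) * l2norm (p - q) / S := by ring

lemma two_mul_le_exp_sq (R : ℝ) : 2 * R ≤ exp (R ^ 2) := by
  nlinarith [add_one_le_exp (R ^ 2), sq_nonneg (R - 1)]

lemma rpow_three_halves {t : ℝ} (ht : 0 < t) : t ^ ((3 : ℝ) / 2) = t * √t := by
  rw [show (3 : ℝ) / 2 = 1 + 1 / 2 by norm_num, rpow_add ht, rpow_one, ← sqrt_eq_rpow]

theorem stmt_17_general {n d : ℕ} (A : Matrix (Fin n) (Fin d) ℝ) (R : ℝ)
    (hA : specNorm A ≤ R) (β : ℝ) (hβ0 : 0 < β)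
    (x y : Fin d → ℝ)
    (hax : β ≤ ∑ i, Real.exp (A.mulVec x i))
    (hx : l2norm x ≤ R) (hy : l2norm y ≤ R) :
    l2norm (softmaxFn A x - softmaxFn A y) ≤
      (β ^ 2)⁻¹ * (n : ℝ) ^ ((3 : ℝ) / 2) * Real.exp (3 * R ^ 2) * l2norm (x - y) := by
  set E := exp (R ^ 2)
  set L := l2norm (x - y)
  set p := fun i => exp ((A *ᵥ x) i)
  set q := fun i => exp ((A *ᵥ y) i)
  have hp_sum : 0 < ∑ i, p i := hβ0.trans_le hax
  obtain ⟨i₀, hi₀⟩ := Finset.nonempty_of_sum_ne_zero hp_sum.ne'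
  have hq_sum : 0 < ∑ i, q i := Finset.sum_pos (fun i _ => exp_pos _) ⟨i₀, hi₀⟩
  have hn : (1 : ℝ) ≤ n := by exact_mod_cast i₀.pos
  have hβ_le : β ≤ n * E := hax.trans (sum_exp_mulVec_le hA hx)
  have hpq_nonneg := l2norm_nonneg (p - q)
  have hL_nonneg := l2norm_nonneg (x - y)
  calc l2norm (softmaxFn A x - softmaxFn A y)
      ≤ (1 + √n) * l2norm (p - q) / ∑ i, p i :=
        l2norm_inv_sum_smul_sub_le (fun i => (exp_pos _).le) hp_sum hq_sum
    _ ≤ (2 * √n) * (E * (R * L)) / β := by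
        have hR : 0 ≤ R := (specNorm_nonneg A).trans hA
        have hexp := l2norm_exp_mulVec_sub_le hA hx hy
        gcongr
        linarith [one_le_sqrt.2 hn]
    _ = 2 * R * β * (√n * E * L) / β ^ 2 := by field_simp
    _ ≤ E * (n * E) * (√n * E * L) / β ^ 2 := by
        gcongr
        linarith [two_mul_le_exp_sq R]
    _ = _ := by
        rw [rpow_three_halves (by linarith), show 3 * R ^ 2 = R ^ 2 + R ^ 2 + R ^ 2 by ring,
          exp_add, exp_add]
        ring

/-- ‖f(x) − f(y)‖₂ ≤ β⁻² n^{1.5} exp(3R²) ‖x − y‖₂. -/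
theorem stmt_17 {n d : ℕ} (A : Matrix (Fin n) (Fin d) ℝ) (R : ℝ) (hR : 4 ≤ R)
    (hA : specNorm A ≤ R) (β : ℝ) (hβ0 : 0 < β) (hβ1 : β < 0.1)
    (x y : Fin d → ℝ)
    (hxy : linfNorm (A.mulVec (x - y)) < 0.01)
    (hax : β ≤ ∑ i, Real.exp (A.mulVec x i))
    (hay : β ≤ ∑ i, Real.exp (A.mulVec y i))
    (hx : l2norm x ≤ R) (hy : l2norm y ≤ R) :
    l2norm (softmaxFn A x - softmaxFn A y) ≤
      (β ^ 2)⁻¹ * (n : ℝ) ^ ((3 : ℝ) / 2) * Real.exp (3 * R ^ 2) * l2norm (x - y) :=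
  stmt_17_general A R hA β hβ0 x y hax hx hy
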